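/- A k-synchronizable system S reaches an empty-buffer deadlock configuration under the asynchronous semantics if and only if the k-synchronous semantics of S admits a matched execution (every sent message is received) reaching an empty-buffer deadlock configuration. -/

import Mathlib

namespace MP

abbrev Pid := ℕ
abbrev Val := ℕ
abbrev Mid := ℕ

/-- Send and receive actions, tagged with a message identifier. -/
inductive Action : Type where
  | snd (i : Mid) (p q : Pid) (v : Val)
  | rcv (i : Mid) (q : Pid) (v : Val)
deriving DecidableEq

abbrev Exec := List Action

namespace Action
def proc : Action → Pid
  | snd _ p _ _ => p
  | rcv _ q _ => q
def dest : Action → Pid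
  | snd _ _ q _ => q
  | rcv _ q _ => q
def mid : Action → Mid
  | snd i _ _ _ => i
  | rcv i _ _ => i
def isSend : Action → Prop
  | snd _ _ _ _ => True
  | rcv _ _ _ => False
def isRecv : Action → Prop
  | snd _ _ _ _ => False
  | rcv _ _ _ => True
end Action

def sendIds (e : Exec) : List Mid :=
  e.filterMap fun a => match a with | .snd i _ _ _ => some i | _ => none
def recvIds (e : Exec) : List Mid :=
  e.filterMap fun a => match a with | .rcv i _ _ => some i | _ => none

/-- Every receive is matched by an earlier send with the same id, destination and payload. -/
def SendBeforeRecv (e : Exec) : Prop :=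
  ∀ (n : ℕ) (i : Mid) (q : Pid) (v : Val), e[n]? = some (Action.rcv i q v) →
    ∃ m < n, ∃ p : Pid, e[m]? = some (Action.snd i p q v)

def ValidTrace (e : Exec) : Prop :=
  (sendIds e).Nodup ∧ (recvIds e).Nodup ∧ SendBeforeRecv e

/-- Projection of an execution on the actions of process `p` (program order). -/
def proj (p : Pid) (e : Exec) : Exec := e.filter (fun a => a.proc == p)

/-- Two executions are trace-equivalent (same happens-before relation) iff one is a
permutation of the other preserving per-process program order (message identifiers
make the matching relation coincide). -/
def TraceEquiv (e e' : Exec) : Prop :=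
  e.Perm e' ∧ ∀ p, proj p e = proj p e'

/-- One step of the happens-before relation on positions: program order or matching. -/
def hbBase (e : Exec) (m n : ℕ) : Prop :=
  m < n ∧ ((∃ a b, e[m]? = some a ∧ e[n]? = some b ∧ a.proc = b.proc) ∨
    (∃ i p q v, e[m]? = some (.snd i p q v) ∧ e[n]? = some (.rcv i q v)))

/-- The happens-before (causal) relation of a trace. -/
def hb (e : Exec) : ℕ → ℕ → Prop := Relation.TransGen (hbBase e)

/-- Causal delivery: messages sent to the same process are received in an order
consistent with the causal order of their sends. -/
def CausalDelivery (e : Exec) : Prop :=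
  ∀ (m n n' : ℕ) (i j : Mid) (p p' q : Pid) (v v' : Val),
    e[m]? = some (Action.snd i p q v) → e[n]? = some (Action.snd j p' q v') →
    hb e m n → e[n']? = some (Action.rcv j q v') →
      ∃ m' < n', e[m']? = some (Action.rcv i q v)

inductive Kind | S | R
deriving DecidableEq

/-- The `X`-action (send or receive) of conflict-graph node `i` in execution `e`. -/
def actionAt (e : Exec) (i : Mid) : Kind → Action → Prop
  | .S, a => (∃ p q v, a = .snd i p q v) ∧ a ∈ e
  | .R, a => (∃ q v, a = .rcv i q v) ∧ a ∈ e

def CGNode (e : Exec) (i : Mid) : Prop := ∃ p q v, Action.snd i p q v ∈ e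

/-- Conflict-graph edge from node `i` to node `j` with label `XY`: the `X`-action of `i`
and the `Y`-action of `j` are by the same process, with the `X`-action of `i` first. -/
def CGEdge (e : Exec) (X Y : Kind) (i j : Mid) : Prop :=
  i ≠ j ∧ ∃ (a b : Action) (m n : ℕ), actionAt e i X a ∧ actionAt e j Y b ∧
    a.proc = b.proc ∧ m < n ∧ e[m]? = some a ∧ e[n]? = some b

/-- A (simple) cycle in the conflict graph of `e`, with labelled edges. -/
structure CGCycle (e : Exec) where
  size : ℕ
  pos : 0 < size
  node : ℕ → Mid
  lab : ℕ → Kind × Kind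
  inj : ∀ k l, k < size → l < size → node k = node l → k = l
  edge : ∀ k < size, CGEdge e (lab k).1 (lab k).2 (node k) (node ((k + 1) % size))

/-- A cycle is good if it contains no RS-labelled edge. -/
def CGCycle.Good {e : Exec} (c : CGCycle e) : Prop :=
  ∀ k < c.size, c.lab k ≠ (Kind.R, Kind.S)

def CGStep (e : Exec) (i j : Mid) : Prop := ∃ X Y, CGEdge e X Y i j
def CGReach (e : Exec) : Mid → Mid → Prop := Relation.ReflTransGen (CGStep e)
def SameSCC (e : Exec) (i j : Mid) : Prop := CGReach e i j ∧ CGReach e j i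
/-- `C` is a strongly connected component of the conflict graph of `e`. -/
def IsSCC (e : Exec) (C : Set Mid) : Prop :=
  ∃ i, CGNode e i ∧ C = {j | CGNode e j ∧ SameSCC e i j}

/-- A message passing system: one labelled transition system per process. -/
structure System where
  State : Type
  init : Pid → State
  sendTr : Pid → State → Pid → Val → State → Prop
  recvTr : Pid → State → Val → State → Prop

/-- Asynchronous configuration: local states plus per-destination FIFO buffers. -/
structure Config (S : System) where
  loc : Pid → S.State
  buf : Pid → List (Mid × Val)

def initConfig (S : System) : Config S := ⟨S.init, fun _ => []⟩

inductive Step (S : System) : Config S → Action → Config S → Prop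
  | send {c : Config S} {i : Mid} {p q : Pid} {v : Val} {l' : S.State} :
      S.sendTr p (c.loc p) q v l' →
      Step S c (.snd i p q v)
        ⟨Function.update c.loc p l', Function.update c.buf q (c.buf q ++ [(i, v)])⟩
  | recv {c : Config S} {i : Mid} {q : Pid} {v : Val} {b : List (Mid × Val)} {l' : S.State} :
      c.buf q = (i, v) :: b →
      S.recvTr q (c.loc q) v l' →
      Step S c (.rcv i q v)
        ⟨Function.update c.loc q l', Function.update c.buf q b⟩

inductive Reach (S : System) : Config S → Exec → Config S → Prop
  | nil (c) : Reach S c [] c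
  | cons {c c' c'' : Config S} {a : Action} {e : Exec} :
      Step S c a c' → Reach S c' e c'' → Reach S c (a :: e) c''

/-- Asynchronous executions (send identifiers are fresh, i.e. pairwise distinct). -/
def AsyncExec (S : System) (e : Exec) : Prop :=
  (sendIds e).Nodup ∧ ∃ c, Reach S (initConfig S) e c

/-- A `k`-exchange block: at most `k` sends followed by receives matching only sends
of the same block. -/
def Block (k : ℕ) (b : Exec) : Prop :=
  ∃ sends recvs : Exec, b = sends ++ recvs ∧
    (∀ a ∈ sends, a.isSend) ∧ (∀ a ∈ recvs, a.isRecv) ∧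
    sends.length ≤ k ∧
    (∀ i q v, Action.rcv i q v ∈ recvs → ∃ p, Action.snd i p q v ∈ sends)

/-- Decomposition into a sequence of `k`-exchange blocks. -/
inductive Blocks (k : ℕ) : Exec → Prop
  | nil : Blocks k []
  | app {b e : Exec} : Block k b → Blocks k e → Blocks k (b ++ e)

/-- A trace is `k`-synchronous if some trace-equivalent execution is a sequence of
`k`-exchanges. -/
def KSynchronous (k : ℕ) (e : Exec) : Prop :=
  ∃ e', TraceEquiv e e' ∧ SendBeforeRecv e' ∧ Blocks k e'

/-- Executions of the `k`-synchronous semantics of `S`. -/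
def SyncExec (S : System) (k : ℕ) (e : Exec) : Prop :=
  AsyncExec S e ∧ Blocks k e

/-- Every asynchronous execution of `S` is trace-equivalent to a `k`-synchronous one. -/
def KSynchronizable (S : System) (k : ℕ) : Prop :=
  ∀ e, AsyncExec S e → KSynchronous k e

/-- A borderline violation: a violation to `k`-synchronizability all of whose strict
prefixes are `k`-synchronous. -/
def Borderline (S : System) (k : ℕ) (e : Exec) : Prop :=
  AsyncExec S e ∧ ¬ KSynchronous k e ∧
  ∀ e', e' <+: e → e' ≠ e → KSynchronous k e'

def Matched (e : Exec) : Prop :=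
  ∀ i p q v, Action.snd i p q v ∈ e → Action.rcv i q v ∈ e

def HasUnmatched (e : Exec) : Prop :=
  ∃ i p q v, Action.snd i p q v ∈ e ∧ Action.rcv i q v ∉ e

def NoSend (S : System) (p : Pid) (l : S.State) : Prop := ∀ q v l', ¬ S.sendTr p l q v l'
def NoRecv (S : System) (p : Pid) (l : S.State) : Prop := ∀ v l', ¬ S.recvTr p l v l'
/-- A final local state: no outgoing transitions. -/
def FinalState (S : System) (p : Pid) (l : S.State) : Prop := NoSend S p l ∧ NoRecv S p l

/-- Deadlocked local states: some process is waiting to receive, and every process is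
in a receiving or final state (no send transitions). -/
def DeadlockLocs (S : System) (l : ∀ _ : Pid, S.State) : Prop :=
  (∃ p v l', S.recvTr p (l p) v l') ∧ ∀ q, NoSend S q (l q)

/-- `l` is a `V`-receiving state of `p`: receiving, and `V` is exactly the set of
receivable payloads. -/
def VReceiving (S : System) (p : Pid) (l : S.State) (V : Set Val) : Prop :=
  NoSend S p l ∧ (∃ v l', S.recvTr p l v l') ∧ ∀ v, (v ∈ V ↔ ∃ l', S.recvTr p l v l')

/-- Unspecified reception: some process is in a receiving state but the head of its
buffer is not receivable there. -/
def UnspecifiedReception (S : System) (c : Config S) : Prop :=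
  ∃ p V, VReceiving S p (c.loc p) V ∧ ∃ i v b, c.buf p = (i, v) :: b ∧ v ∉ V

/-- Position `n` of `e` carries an unmatched send with destination `p`. -/
def UnmatchedAt (e : Exec) (n : ℕ) (p : Pid) : Prop :=
  ∃ (i : Mid) (p' : Pid) (v : Val), e[n]? = some (Action.snd i p' p v) ∧ Action.rcv i p v ∉ e

/-- A causally minimal unmatched send with destination `p`. -/
def MinUnmatched (e : Exec) (n : ℕ) (p : Pid) : Prop :=
  UnmatchedAt e n p ∧ ∀ m, UnmatchedAt e m p → ¬ hb e m n

/-- Deterministic transition relations. -/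
def Deterministic (S : System) : Prop :=
  (∀ p l q v l₁ l₂, S.sendTr p l q v l₁ → S.sendTr p l q v l₂ → l₁ = l₂) ∧
  (∀ p l v l₁ l₂, S.recvTr p l v l₁ → S.recvTr p l v l₂ → l₁ = l₂)

/-- No process performs more than `K` consecutive sends. -/
def SendBoundedE (K : ℕ) (e : Exec) : Prop :=
  ∀ p l, l <:+: proj p e → (∀ a ∈ l, a.isSend) → l.length ≤ K
/-- No process performs more than `K` consecutive receives. -/
def RecvBoundedE (K : ℕ) (e : Exec) : Prop :=
  ∀ p l, l <:+: proj p e → (∀ a ∈ l, a.isRecv) → l.length ≤ K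
/-- Flow-bounded system with bound `K`. -/
def FlowBounded (S : System) (K : ℕ) : Prop :=
  ∀ e, AsyncExec S e → SendBoundedE K e ∧ RecvBoundedE K e

/-- A finite-state message passing system. -/
structure FinSystem where
  nS : ℕ
  nP : ℕ
  nV : ℕ
  init : Fin nP → Fin nS
  sendTr : Fin nP → Fin nS → Fin nP → Fin nV → Fin nS → Bool
  recvTr : Fin nP → Fin nS → Fin nV → Fin nS → Bool

def FinSystem.toSystem (F : FinSystem) : System where
  State := Option (Fin F.nS)
  init p := if h : p < F.nP then some (F.init ⟨p, h⟩) else none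
  sendTr p l q v l' :=
    ∃ (hp : p < F.nP) (hq : q < F.nP) (hv : v < F.nV) (s s' : Fin F.nS),
      l = some s ∧ l' = some s' ∧ F.sendTr ⟨p, hp⟩ s ⟨q, hq⟩ ⟨v, hv⟩ s' = true
  recvTr p l v l' :=
    ∃ (hp : p < F.nP) (hv : v < F.nV) (s s' : Fin F.nS),
      l = some s ∧ l' = some s' ∧ F.recvTr ⟨p, hp⟩ s ⟨v, hv⟩ s' = true


/-!
A run that ends with empty buffers is matched. By `k`-synchronizability it is trace-equivalent
to a sequence of `k`-exchanges, and since send identifiers are fresh, each message of that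
sequence is sent and received inside one exchange. Reissuing the sends of every exchange in
the order of the original run makes each receive find its message at the head of its buffer,
so the reordered sequence is again a run; it has the same projection on every process, hence
reaches the same local states. Conversely, a matched run leaves no message pending.
-/

open scoped List

theorem List.Nodup.sublist_ext {α : Type*} {L l₁ l₂ : List α} (hL : L.Nodup)
    (h₁ : l₁ <+ L) (h₂ : l₂ <+ L) : l₁ = l₂ ↔ ∀ a, a ∈ l₁ ↔ a ∈ l₂ := by
  refine ⟨fun h => by simp [h], fun h => ?_⟩
  induction L generalizing l₁ l₂ with
  | nil => simp_all
  | cons x L ih =>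
    obtain ⟨hx, hL⟩ := List.nodup_cons.mp hL
    rcases List.sublist_cons_iff.mp h₁ with s₁ | ⟨r₁, rfl, s₁⟩ <;>
      rcases List.sublist_cons_iff.mp h₂ with s₂ | ⟨r₂, rfl, s₂⟩
    · exact ih hL s₁ s₂ h
    · exact absurd (s₁.subset ((h x).2 List.mem_cons_self)) hx
    · exact absurd (s₂.subset ((h x).1 List.mem_cons_self)) hx
    · refine congrArg _ (ih hL s₁ s₂ fun a => ?_)
      have := h a
      have ha₁ : a ∈ r₁ → a ≠ x := fun ha hax => hx (hax ▸ s₁.subset ha)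
      have ha₂ : a ∈ r₂ → a ≠ x := fun ha hax => hx (hax ▸ s₂.subset ha)
      grind

instance : DecidablePred Action.isSend
  | .snd .. => isTrue trivial
  | .rcv .. => isFalse id

@[simp] lemma isSend_snd (i : Mid) (p q : Pid) (v : Val) : (Action.snd i p q v).isSend := trivial

@[simp] lemma not_isSend_rcv (i : Mid) (q : Pid) (v : Val) : ¬(Action.rcv i q v).isSend := id

def sendsTo (q : Pid) (e : Exec) : List (Mid × Val) :=
  e.filterMap fun a => match a with
    | .snd i _ q' v => if q' = q then some (i, v) else none
    | _ => none

def recvsAt (q : Pid) (e : Exec) : List (Mid × Val) :=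
  e.filterMap fun a => match a with
    | .rcv i q' v => if q' = q then some (i, v) else none
    | _ => none

@[simp] lemma sendsTo_append (q : Pid) (e e' : Exec) :
    sendsTo q (e ++ e') = sendsTo q e ++ sendsTo q e' := List.filterMap_append

@[simp] lemma recvsAt_append (q : Pid) (e e' : Exec) :
    recvsAt q (e ++ e') = recvsAt q e ++ recvsAt q e' := List.filterMap_append

@[simp] lemma sendIds_append (e e' : Exec) : sendIds (e ++ e') = sendIds e ++ sendIds e' :=
  List.filterMap_append

@[simp] lemma proj_append (p : Pid) (e e' : Exec) : proj p (e ++ e') = proj p e ++ proj p e' :=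
  List.filter_append _ _

lemma mem_sendsTo {q : Pid} {i : Mid} {v : Val} {e : Exec} :
    (i, v) ∈ sendsTo q e ↔ ∃ p, Action.snd i p q v ∈ e := by
  simp only [sendsTo, List.mem_filterMap]
  constructor
  · rintro ⟨_ | _, ha, h⟩ <;> simp only [Option.ite_none_right_eq_some, Option.some.injEq,
      Prod.mk.injEq, reduceCtorEq] at h
    obtain ⟨rfl, rfl, rfl⟩ := h
    exact ⟨_, ha⟩
  · rintro ⟨p, hp⟩
    exact ⟨_, hp, by simp⟩

lemma mem_recvsAt {q : Pid} {i : Mid} {v : Val} {e : Exec} :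
    (i, v) ∈ recvsAt q e ↔ Action.rcv i q v ∈ e := by
  simp only [recvsAt, List.mem_filterMap]
  constructor
  · rintro ⟨_ | _, ha, h⟩ <;> simp only [Option.ite_none_right_eq_some, Option.some.injEq,
      Prod.mk.injEq, reduceCtorEq] at h
    obtain ⟨rfl, rfl, rfl⟩ := h
    exact ha
  · intro h
    exact ⟨_, h, by simp⟩

lemma mem_sendIds_of_snd_mem {i : Mid} {p q : Pid} {v : Val} {e : Exec}
    (h : Action.snd i p q v ∈ e) : i ∈ sendIds e :=
  List.mem_filterMap.mpr ⟨_, h, rfl⟩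

lemma sendsTo_eq_nil {q : Pid} {e : Exec} (h : ∀ a ∈ e, a.isRecv) : sendsTo q e = [] :=
  List.filterMap_eq_nil_iff.mpr fun a ha => by
    cases a with
    | snd => exact (h _ ha).elim
    | rcv => rfl

lemma recvsAt_eq_nil {q : Pid} {e : Exec} (h : ∀ a ∈ e, a.isSend) : recvsAt q e = [] :=
  List.filterMap_eq_nil_iff.mpr fun a ha => by
    cases a with
    | snd => rfl
    | rcv => exact (h _ ha).elim

lemma sendsTo_filter_isSend (q : Pid) (e : Exec) :
    sendsTo q (e.filter (·.isSend)) = sendsTo q e := by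
  induction e with
  | nil => rfl
  | cons a e ih =>
    rcases a with ⟨i, p, q', v⟩ | _
    · by_cases hq : q' = q <;> simp_all [sendsTo]
    · simp_all [sendsTo]

lemma sendIds_eq_map_mid_filter_isSend (e : Exec) :
    sendIds e = (e.filter (·.isSend)).map Action.mid := by
  induction e with
  | nil => rfl
  | cons a e ih => cases a <;> simp_all [sendIds, Action.mid]

lemma nodup_filter_isSend {e : Exec} (h : (sendIds e).Nodup) : (e.filter (·.isSend)).Nodup :=
  (sendIds_eq_map_mid_filter_isSend e ▸ h).of_map _

lemma map_fst_sendsTo_sublist (q : Pid) (e : Exec) : (sendsTo q e).map Prod.fst <+ sendIds e := by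
  induction e with
  | nil => simp [sendsTo, sendIds]
  | cons a e ih =>
    rcases a with ⟨i, p, q', v⟩ | _
    · by_cases hq : q' = q
      · simpa [sendsTo, sendIds, hq] using ih.cons_cons i
      · simpa [sendsTo, sendIds, hq] using ih.cons i
    · simpa [sendsTo, sendIds] using ih

lemma nodup_sendsTo {e : Exec} (h : (sendIds e).Nodup) (q : Pid) : (sendsTo q e).Nodup :=
  ((h.sublist (map_fst_sendsTo_sublist q e)).of_map _)

lemma recvsAt_proj_self (q : Pid) (e : Exec) : recvsAt q (proj q e) = recvsAt q e := by
  induction e with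
  | nil => rfl
  | cons a e ih =>
    rcases a with ⟨i, p, q', v⟩ | ⟨i, q', v⟩
    · by_cases hp : p = q <;> simp_all [proj, recvsAt, Action.proc]
    · by_cases hq : q' = q <;> simp_all [proj, recvsAt, Action.proc]

def Balanced (e : Exec) : Prop := ∀ q, sendsTo q e = recvsAt q e

lemma Balanced.append {b g : Exec} (hb : Balanced b) (hg : Balanced g) : Balanced (b ++ g) :=
  fun q => by simp [hb q, hg q]

lemma Balanced.matched {e : Exec} (h : Balanced e) : Matched e := fun _ p q _ hs =>
  mem_recvsAt.mp (h q ▸ mem_sendsTo.mpr ⟨p, hs⟩)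

lemma Matched.of_perm {e e' : Exec} (h : e.Perm e') (hM : Matched e) : Matched e' :=
  fun i p q v hs => h.mem_iff.mp (hM i p q v (h.mem_iff.mpr hs))

lemma TraceEquiv.append {b b' g g' : Exec} (hb : TraceEquiv b b') (hg : TraceEquiv g g') :
    TraceEquiv (b ++ g) (b' ++ g') :=
  ⟨hb.1.append hg.1, fun p => by simp only [proj_append, hb.2 p, hg.2 p]⟩

def RecvsHaveSends (e : Exec) : Prop :=
  ∀ i q v, Action.rcv i q v ∈ e → ∃ p, Action.snd i p q v ∈ e

lemma Block.recvsHaveSends {k : ℕ} {b : Exec} (h : Block k b) : RecvsHaveSends b := by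
  obtain ⟨sends, recvs, rfl, hS, -, -, hmatch⟩ := h
  intro i q v hr
  rcases List.mem_append.mp hr with hr | hr
  · exact (hS _ hr).elim
  · exact (hmatch i q v hr).imp fun _ => List.mem_append_left _

lemma Blocks.recvsHaveSends {k : ℕ} {e : Exec} (h : Blocks k e) : RecvsHaveSends e := by
  induction h with
  | nil => intro _ _ _ h; simp at h
  | app hb _ ih =>
    intro i q v hr
    rcases List.mem_append.mp hr with hr | hr
    · exact (hb.recvsHaveSends i q v hr).imp fun _ => List.mem_append_left _
    · exact (ih i q v hr).imp fun _ => List.mem_append_right _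

/-- With fresh identifiers, a message sent in one part of `b ++ g` cannot be received in the
other part, because that receive has its own send there. -/
lemma Matched.of_append {b g : Exec} (hb : RecvsHaveSends b) (hg : RecvsHaveSends g)
    (hN : (sendIds (b ++ g)).Nodup) (hM : Matched (b ++ g)) : Matched b ∧ Matched g := by
  rw [sendIds_append] at hN
  have hdisj := List.disjoint_of_nodup_append hN
  constructor
  · intro i p q v hs
    refine (List.mem_append.mp (hM i p q v (List.mem_append_left _ hs))).resolve_right fun hr => ?_
    obtain ⟨p', hs'⟩ := hg i q v hr
    exact hdisj (mem_sendIds_of_snd_mem hs) (mem_sendIds_of_snd_mem hs')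
  · intro i p q v hs
    refine (List.mem_append.mp (hM i p q v (List.mem_append_right _ hs))).resolve_left fun hr => ?_
    obtain ⟨p', hs'⟩ := hb i q v hr
    exact hdisj (mem_sendIds_of_snd_mem hs') (mem_sendIds_of_snd_mem hs)

/-- Every receive at `q` consumes the oldest message pending for `q`, from empty buffers. -/
def FifoOrdered (f : Exec) : Prop := ∀ q g, g <+: f → recvsAt q g <+: sendsTo q g

lemma FifoOrdered.append {b g : Exec} (hb : FifoOrdered b) (hbal : Balanced b)
    (hg : FifoOrdered g) : FifoOrdered (b ++ g) := by
  rintro q h ⟨t, ht⟩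
  rcases List.append_eq_append_iff.mp ht with ⟨h', rfl, -⟩ | ⟨h', rfl, hh'⟩
  · exact hb q h ⟨h', rfl⟩
  · rw [recvsAt_append, sendsTo_append, hbal, List.prefix_append_right_inj]
    exact hg q h' ⟨t, hh'.symm⟩

lemma fifoOrdered_append_of_sendsTo_eq_recvsAt {s r : Exec} (hS : ∀ a ∈ s, a.isSend)
    (hR : ∀ a ∈ r, a.isRecv) (h : ∀ q, sendsTo q s = recvsAt q r) : FifoOrdered (s ++ r) := by
  rintro q g ⟨t, ht⟩
  rcases List.append_eq_append_iff.mp ht with ⟨h', rfl, -⟩ | ⟨h', rfl, hh'⟩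
  · rw [recvsAt_eq_nil fun a ha => hS a (List.mem_append_left _ ha)]
    exact List.nil_prefix
  · rw [recvsAt_append, sendsTo_append, recvsAt_eq_nil hS, h,
      sendsTo_eq_nil fun a ha => hR a (hh' ▸ List.mem_append_left _ ha), List.append_nil]
    exact List.IsPrefix.filterMap _ ⟨t, hh'.symm⟩

def RespectsOrder (L f : Exec) : Prop :=
  (∀ p, (proj p f).filter (·.isSend) <+ L) ∧ ∀ q, recvsAt q f <+ sendsTo q L

lemma RespectsOrder.of_append {L b g : Exec} (h : RespectsOrder L (b ++ g)) :
    RespectsOrder L b ∧ RespectsOrder L g := by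
  obtain ⟨hS, hR⟩ := h
  simp only [proj_append, List.filter_append, recvsAt_append] at hS hR
  exact ⟨⟨fun p => (List.sublist_append_left _ _).trans (hS p),
      fun q => (List.sublist_append_left _ _).trans (hR q)⟩,
    ⟨fun p => (List.sublist_append_right _ _).trans (hS p),
      fun q => (List.sublist_append_right _ _).trans (hR q)⟩⟩

/-- Inside a matched block, sending in the order of `L` makes each destination receive its
messages in the order they were sent, while the projection on each process is unchanged. -/
lemma Block.exists_fifo {k : ℕ} {L b : Exec} (hL : L.Nodup) (hLq : ∀ q, (sendsTo q L).Nodup)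
    (hb : Block k b) (hO : RespectsOrder L b) (hM : Matched b) (hN : (sendIds b).Nodup) :
    ∃ b', TraceEquiv b b' ∧ Block k b' ∧ FifoOrdered b' ∧ Balanced b' := by
  obtain ⟨sends, recvs, rfl, hS, hR, hlen, hmatch⟩ := hb
  have hprojL : ∀ p, proj p sends <+ L := fun p => by
    refine .trans ?_ (hO.1 p)
    rw [proj_append, List.filter_append, List.filter_eq_self (l := proj p sends).mpr
      fun a ha => decide_eq_true (hS a (List.mem_of_mem_filter ha))]
    exact List.sublist_append_left _ _
  have hnd : sends.Nodup := by
    have := nodup_filter_isSend (hN.sublist ((List.sublist_append_left sends recvs).filterMap _))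
    rwa [List.filter_eq_self.mpr fun a ha => decide_eq_true (hS a ha)] at this
  set sends' := L.filter (· ∈ sends)
  have hperm : sends'.Perm sends := (List.perm_ext_iff_of_nodup (hL.filter _) hnd).mpr fun a => by
    simpa [sends'] using fun ha => (hprojL a.proc).subset (List.mem_filter.mpr ⟨ha, by simp⟩)
  have hS' : ∀ a ∈ sends', a.isSend := fun a ha => hS a (hperm.mem_iff.mp ha)
  have hproj : ∀ p, proj p sends' = proj p sends := fun p =>
    (List.Nodup.sublist_ext hL (List.filter_sublist.trans List.filter_sublist) (hprojL p)).mpr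
      fun _ => (hperm.filter _).mem_iff
  have hsendsTo : ∀ q, sendsTo q sends' = recvsAt q recvs := by
    intro q
    have hRL : recvsAt q recvs <+ sendsTo q L := by
      simpa [recvsAt_eq_nil hS] using hO.2 q
    refine (List.Nodup.sublist_ext (hLq q) (List.filter_sublist.filterMap _) hRL).mpr
      fun ⟨i, v⟩ => ?_
    change (i, v) ∈ sendsTo q sends' ↔ _
    rw [mem_sendsTo, mem_recvsAt]
    constructor
    · rintro ⟨p, hp⟩
      have hr := hM i p q v (List.mem_append_left _ (hperm.mem_iff.mp hp))
      exact (List.mem_append.mp hr).resolve_left fun hr => hS _ hr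
    · exact fun hr => (hmatch i q v hr).imp fun _ => hperm.mem_iff.mpr
  refine ⟨sends' ++ recvs, ⟨hperm.symm.append_right _, fun p => by simp [hproj]⟩,
    ⟨sends', recvs, rfl, hS', hR, hperm.length_eq ▸ hlen,
      fun i q v hr => (hmatch i q v hr).imp fun _ => hperm.mem_iff.mpr⟩,
    fifoOrdered_append_of_sendsTo_eq_recvsAt hS' hR hsendsTo, fun q => ?_⟩
  simp [sendsTo_eq_nil hR, recvsAt_eq_nil hS', hsendsTo]

lemma Blocks.exists_fifo {k : ℕ} {L f : Exec} (hL : L.Nodup) (hLq : ∀ q, (sendsTo q L).Nodup)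
    (hf : Blocks k f) (hO : RespectsOrder L f) (hM : Matched f) (hN : (sendIds f).Nodup) :
    ∃ f', TraceEquiv f f' ∧ Blocks k f' ∧ FifoOrdered f' ∧ Balanced f' := by
  induction hf with
  | nil => exact ⟨[], ⟨.refl _, fun _ => rfl⟩, .nil, fun _ _ hg => List.prefix_nil.mp hg ▸
      List.nil_prefix, fun _ => rfl⟩
  | @app b g hb hg ih =>
    obtain ⟨hOb, hOg⟩ := hO.of_append
    obtain ⟨hMb, hMg⟩ := hM.of_append hb.recvsHaveSends hg.recvsHaveSends hN
    rw [sendIds_append] at hN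
    obtain ⟨b', hbb', hb', hfifo_b, hbal_b⟩ := hb.exists_fifo hL hLq hOb hMb hN.of_append_left
    obtain ⟨g', hgg', hg', hfifo_g, hbal_g⟩ := ih hOg hMg hN.of_append_right
    exact ⟨b' ++ g', hbb'.append hgg', .app hb' hg', hfifo_b.append hbal_b hfifo_g,
      hbal_b.append hbal_g⟩

lemma respectsOrder_filter_isSend {e e' : Exec} (h : TraceEquiv e e')
    (hbal : Balanced e) : RespectsOrder (e.filter (·.isSend)) e' := by
  refine ⟨fun p => ?_, fun q => ?_⟩
  · rw [← h.2 p]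
    exact List.filter_sublist.filter _
  · rw [← recvsAt_proj_self, ← h.2 q, recvsAt_proj_self, ← hbal q, sendsTo_filter_isSend]

inductive LocRun (S : System) (p : Pid) : S.State → Exec → S.State → Prop
  | nil (l : S.State) : LocRun S p l [] l
  | send {l l' l'' : S.State} {i : Mid} {q : Pid} {v : Val} {e : Exec} :
      S.sendTr p l q v l' → LocRun S p l' e l'' → LocRun S p l (.snd i p q v :: e) l''
  | recv {l l' l'' : S.State} {i : Mid} {v : Val} {e : Exec} :
      S.recvTr p l v l' → LocRun S p l' e l'' → LocRun S p l (.rcv i p v :: e) l''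

section

variable {S : System}

lemma LocRun.append {p : Pid} {l l' l'' : S.State} {e e' : Exec}
    (h : LocRun S p l e l') (h' : LocRun S p l' e' l'') : LocRun S p l (e ++ e') l'' := by
  induction h with
  | nil => exact h'
  | send hs _ ih => exact .send hs (ih h')
  | recv hr _ ih => exact .recv hr (ih h')

lemma Step.buf_append_sendsTo {c c' : Config S} {a : Action} (h : Step S c a c') (q : Pid) :
    c.buf q ++ sendsTo q [a] = recvsAt q [a] ++ c'.buf q := by
  cases h with
  | @send i p q' v _ _ =>
    by_cases hq : q' = q <;> simp_all [sendsTo, recvsAt, eq_comm]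
  | @recv i q' v b _ hb _ =>
    by_cases hq : q' = q <;> simp_all [sendsTo, recvsAt, eq_comm]

lemma Step.locRun_proj {c c' : Config S} {a : Action} (h : Step S c a c') (p : Pid) :
    LocRun S p (c.loc p) (proj p [a]) (c'.loc p) := by
  cases h with
  | @send i p' q v _ hs =>
    by_cases hp : p' = p
    · subst hp; simpa [proj, Action.proc] using LocRun.send (i := i) hs (.nil _)
    · simpa [proj, Action.proc, hp, Function.update_of_ne (Ne.symm hp)] using LocRun.nil _
  | @recv i q v b _ _ hr =>
    by_cases hq : q = p
    · subst hq; simpa [proj, Action.proc] using LocRun.recv (i := i) hr (.nil _)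
    · simpa [proj, Action.proc, hq, Function.update_of_ne (Ne.symm hq)] using LocRun.nil _

lemma Reach.buf_append_sendsTo {c c' : Config S} {e : Exec} (h : Reach S c e c') (q : Pid) :
    c.buf q ++ sendsTo q e = recvsAt q e ++ c'.buf q := by
  induction h with
  | nil => simp [sendsTo, recvsAt]
  | @cons _ _ _ a e hstep _ ih =>
    rw [← List.singleton_append, sendsTo_append, recvsAt_append, ← List.append_assoc,
      hstep.buf_append_sendsTo, List.append_assoc, ih, List.append_assoc]

lemma Reach.locRun_proj {c c' : Config S} {e : Exec} (h : Reach S c e c') (p : Pid) :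
    LocRun S p (c.loc p) (proj p e) (c'.loc p) := by
  induction h with
  | nil => exact .nil _
  | @cons _ _ _ a e hstep _ ih =>
    rw [← List.singleton_append, proj_append]
    exact (hstep.locRun_proj p).append ih

lemma LocRun.update_of_cons {c : Config S} {a : Action} {t : Exec} {Lf : Pid → S.State}
    {l' : S.State} (hL : ∀ p, LocRun S p (c.loc p) (proj p (a :: t)) (Lf p))
    (h : LocRun S a.proc l' (proj a.proc t) (Lf a.proc)) (p : Pid) :
    LocRun S p (Function.update c.loc a.proc l' p) (proj p t) (Lf p) := by
  by_cases hp : p = a.proc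
  · subst hp; simpa using h
  · simpa [proj, hp, Ne.symm hp] using hL p

lemma Step.exists_of_locRun {c : Config S} {a : Action} {t : Exec} {Lf : Pid → S.State}
    (hL : ∀ p, LocRun S p (c.loc p) (proj p (a :: t)) (Lf p))
    (hB : ∀ q, recvsAt q [a] <+: c.buf q ++ sendsTo q [a]) :
    ∃ c', Step S c a c' ∧ ∀ p, LocRun S p (c'.loc p) (proj p t) (Lf p) := by
  have ha := hL a.proc
  rw [show proj a.proc (a :: t) = a :: proj a.proc t by simp [proj]] at ha
  cases a with
  | snd i p q v =>
    cases ha with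
    | send hs hrest => exact ⟨_, .send hs, LocRun.update_of_cons hL hrest⟩
  | rcv i q v =>
    obtain ⟨b, hb⟩ : [(i, v)] <+: c.buf q := by simpa [recvsAt, sendsTo] using hB q
    cases ha with
    | recv hr hrest => exact ⟨_, .recv hb.symm hr, LocRun.update_of_cons hL hrest⟩

lemma Reach.exists_of_locRun (f : Exec) {c : Config S} {Lf : Pid → S.State}
    (hL : ∀ p, LocRun S p (c.loc p) (proj p f) (Lf p))
    (hB : ∀ q g, g <+: f → recvsAt q g <+: c.buf q ++ sendsTo q g) :
    ∃ c', Reach S c f c' ∧ c'.loc = Lf := by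
  induction f generalizing c with
  | nil =>
    refine ⟨c, .nil c, funext fun p => ?_⟩
    have h := hL p
    generalize c.loc p = l, Lf p = l' at h ⊢
    cases h; rfl
  | cons a t ih =>
    obtain ⟨c₁, hstep, hL₁⟩ :=
      Step.exists_of_locRun hL fun q => by simpa using hB q [a] ⟨t, rfl⟩
    have hB₁ : ∀ q g, g <+: t → recvsAt q g <+: c₁.buf q ++ sendsTo q g := by
      intro q g hg
      have := hB q (a :: g) (List.cons_prefix_cons.mpr ⟨rfl, hg⟩)
      rwa [← List.singleton_append, recvsAt_append, sendsTo_append, ← List.append_assoc,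
        hstep.buf_append_sendsTo, List.append_assoc, List.prefix_append_right_inj] at this
    obtain ⟨c', hreach, hloc⟩ := ih hL₁ hB₁
    exact ⟨c', .cons hstep hreach, hloc⟩

lemma Reach.sendsTo_eq_recvsAt_append {c : Config S} {e : Exec}
    (h : Reach S (initConfig S) e c) (q : Pid) : sendsTo q e = recvsAt q e ++ c.buf q :=
  h.buf_append_sendsTo q

lemma Reach.balanced {c : Config S} {e : Exec} (h : Reach S (initConfig S) e c)
    (hbuf : ∀ q, c.buf q = []) : Balanced e := fun q => by
  simpa [hbuf q] using h.sendsTo_eq_recvsAt_append q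

lemma Reach.buf_eq_nil_of_matched {c : Config S} {e : Exec}
    (h : Reach S (initConfig S) e c) (hnd : (sendIds e).Nodup) (hM : Matched e) (q : Pid) :
    c.buf q = [] := by
  rw [List.eq_nil_iff_forall_not_mem]
  rintro ⟨i, v⟩ hmem
  have hsend : (i, v) ∈ sendsTo q e :=
    h.sendsTo_eq_recvsAt_append q ▸ List.mem_append_right _ hmem
  obtain ⟨p, hp⟩ := mem_sendsTo.mp hsend
  have hrecv : (i, v) ∈ recvsAt q e := mem_recvsAt.mpr (hM i p q v hp)
  have hnd' := nodup_sendsTo hnd q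
  rw [h.sendsTo_eq_recvsAt_append q] at hnd'
  exact List.disjoint_of_nodup_append hnd' hrecv hmem

lemma Reach.exists_blocks_of_traceEquiv {k : ℕ} {c : Config S} {e e' : Exec}
    (hreach : Reach S (initConfig S) e c) (hnd : (sendIds e).Nodup) (hbuf : ∀ q, c.buf q = [])
    (hequiv : TraceEquiv e e') (hblocks : Blocks k e') :
    ∃ e'' c'', e.Perm e'' ∧ Reach S (initConfig S) e'' c'' ∧ Blocks k e'' ∧
      c''.loc = c.loc := by
  have hbal := hreach.balanced hbuf
  obtain ⟨e'', hequiv', hblocks', hfifo, -⟩ := hblocks.exists_fifo (nodup_filter_isSend hnd)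
    (fun q => sendsTo_filter_isSend q e ▸ nodup_sendsTo hnd q)
    (respectsOrder_filter_isSend hequiv hbal)
    (hbal.matched.of_perm hequiv.1)
    ((hequiv.1.filterMap _).nodup_iff.mp hnd)
  obtain ⟨c'', hreach'', hloc⟩ := Reach.exists_of_locRun e'' (c := initConfig S) (Lf := c.loc)
    (fun p => by rw [← hequiv'.2 p, ← hequiv.2 p]; exact hreach.locRun_proj p)
    hfifo
  exact ⟨e'', c'', hequiv.1.trans hequiv'.1, hreach'', hblocks', hloc⟩

end

/-- A `k`-synchronizable system reaches an empty-buffer deadlock under the asynchronous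
semantics iff its `k`-synchronous semantics admits a matched execution to an
empty-buffer deadlock configuration. -/
theorem emptyBuffer_deadlock_iff (S : System) (k : ℕ) (h : KSynchronizable S k) :
    (∃ (e : Exec) (c : Config S), (sendIds e).Nodup ∧ Reach S (initConfig S) e c ∧
        (∀ q, c.buf q = []) ∧ DeadlockLocs S c.loc) ↔
    (∃ (e : Exec) (c : Config S), (sendIds e).Nodup ∧ Reach S (initConfig S) e c ∧
        Blocks k e ∧ Matched e ∧ DeadlockLocs S c.loc) := by
  constructor
  · rintro ⟨e, c, hnd, hreach, hbuf, hdl⟩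
    obtain ⟨e', hequiv, -, hblocks⟩ := h e ⟨hnd, c, hreach⟩
    obtain ⟨e'', c'', hperm, hreach'', hblocks'', hloc⟩ :=
      hreach.exists_blocks_of_traceEquiv hnd hbuf hequiv hblocks
    have hM := (hreach.balanced hbuf).matched
    exact ⟨e'', c'', (hperm.filterMap _).nodup_iff.mp hnd, hreach'', hblocks'', hM.of_perm hperm,
      hloc ▸ hdl⟩
  · rintro ⟨e, c, hnd, hreach, -, hM, hdl⟩
    exact ⟨e, c, hnd, hreach, hreach.buf_eq_nil_of_matched hnd hM, hdl⟩

end MP
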